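/- Let V be a finite-dimensional real vector space with a nondegenerate symmetric bilinear form, A an algebraic curvature tensor on V (i.e. A(x,y,z,w) = A(z,w,x,y) = -A(y,x,z,w) and A satisfies the first Bianchi identity), and T a self-adjoint linear map of V. If A(Tx,y,z,w) = -A(Ty,x,z,w) for all x,y,z,w in V, then A(Tx,y,z,w) = A(x,Ty,z,w) = A(x,y,Tz,w) = A(x,y,z,Tw) for all x,y,z,w in V. -/
import Mathlib


/-- If `A` is an algebraic curvature tensor, `T` self-adjoint, and
`A(Tx,y,z,w) = -A(Ty,x,z,w)` for all vectors, then `T` can be moved across all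
four slots of `A`. -/
theorem stmt_0 {V : Type*} [AddCommGroup V] [Module ℝ V] [FiniteDimensional ℝ V]
    (B : LinearMap.BilinForm ℝ V) (hBsymm : ∀ x y, B x y = B y x)
    (hBnd : B.Nondegenerate)
    (A : V →ₗ[ℝ] V →ₗ[ℝ] V →ₗ[ℝ] V →ₗ[ℝ] ℝ)
    (hpair : ∀ x y z w, A x y z w = A z w x y)
    (hanti : ∀ x y z w, A x y z w = -A y x z w)
    (hbianchi : ∀ x y z w, A x y z w + A y z x w + A z x y w = 0)
    (T : V →ₗ[ℝ] V) (hT : ∀ x y, B (T x) y = B x (T y))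
    (h : ∀ x y z w, A (T x) y z w = -A (T y) x z w) :
    ∀ x y z w, A (T x) y z w = A x (T y) z w ∧ A x (T y) z w = A x y (T z) w ∧
      A x y (T z) w = A x y z (T w) := by
  have key : ∀ x y z w, A (T x) y z w = A x y (T z) w := by
    intro x y z w
    linarith [hpair x (T y) z w,
      hanti x (T y) z w,
      hpair x y (T z) w,
      hanti x y (T z) w,
      hanti (T x) y w z,
      hpair x (T y) w z,
      hanti x (T y) w z,
      hbianchi x (T y) w z,
      hpair x y (T w) z,
      hanti x y (T w) z,
      hanti x y w (T z),
      hbianchi x y w (T z),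
      h x y w z,
      hpair x (T z) y w,
      hbianchi x (T z) y w,
      hpair (T x) z w y,
      hpair x (T z) w y,
      hanti x (T z) w y,
      hanti x z w (T y),
      hbianchi x z w (T y),
      h x z w y,
      hbianchi (T x) w y z,
      hanti x (T w) y z,
      hbianchi x (T w) y z,
      hpair x w (T y) z,
      hanti x w (T y) z,
      hanti x w y (T z),
      hbianchi x w y (T z),
      h x w y z,
      hanti x w z (T y),
      hbianchi x w z (T y),
      h y x z w,
      h y z x w,
      h y w x z,
      h z w x y]
  intro x y z w
  have h1 : A (T x) y z w = A x (T y) z w := by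
    linarith [h x y z w, hanti (T y) x z w]
  refine ⟨h1, ?_, ?_⟩
  · linarith [key x y z w]
  · linarith [hpair x y (T z) w, h z w x y, hanti (T w) z x y, hpair z (T w) x y]
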